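/- arXiv:1204.0460 — 6 statements merged into one kernel-verified Lean document; each statement's English description precedes it below -/
import Mathlib

section
/- Let γ > 1, d = (γ+1)/(γ−1), and let z, u, m : ℝ × ℝ → ℝ be C² functions of (x,t) with z > 0 and m > 0 everywhere, satisfying ∂_t m = 0, ∂_t z + (c/m)·∂_x u = 0, and ∂_t u + m·c·∂_x z + 2·(p/m)·∂_x m = 0, where c = m·z^d and p = m²·z^{1+d}/(d+1). Define α = ∂_x u + m·∂_x z + (2/(d+1))·(∂_x m)·z and β = ∂_x u − m·∂_x z − (2/(d+1))·(∂_x m)·z. Then everywhere: ∂_t α + c·∂_x α = k₁·( k₂·(3α + β) + α·β − α² ) and ∂_t β − c·∂_x β = k₁·( −k₂·(α + 3β) + α·β − β² ), where k₁ = ((γ+1)/(2(γ−1)))·z^{2/(γ−1)} and k₂ = ((γ−1)/(γ(γ+1)))·z·(∂_x m). -/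
/-!
The equations are differentiated in `x`; because the solution is `C²`, mixed partials commute,
so `∂ₓ∂ₜ z` and `∂ₓ∂ₜ u` are known in terms of `x`-derivatives only, and `∂ₜ∂ₓ m = 0`.
Writing `α, β = uₓ ± (m zₓ + 2/(d+1) mₓ z)`, the derivative of either along its characteristic
becomes an identity between polynomials in `z`, `z^(d-1)`, `m` and the first and second
`x`-derivatives: the second derivatives cancel and the Riccati right-hand side remains, once the
`γ`-coefficients are rewritten through `d`, e.g. `2/(γ-1) = d-1`.
-/

/-- Partial derivative in the first (spatial, `x`) variable. -/
noncomputable def pdX (f : ℝ × ℝ → ℝ) (q : ℝ × ℝ) : ℝ := fderiv ℝ f q (1, 0)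

/-- Partial derivative in the second (temporal, `t`) variable. -/
noncomputable def pdT (f : ℝ × ℝ → ℝ) (q : ℝ × ℝ) : ℝ := fderiv ℝ f q (0, 1)

section DirectionalDerivative

variable {E F : Type*} [NormedAddCommGroup E] [NormedSpace ℝ E] [NormedAddCommGroup F]
  [NormedSpace ℝ F] {f g : E → ℝ} {h : E → F} {x : E}

theorem fderiv_fun_mul_apply (hf : DifferentiableAt ℝ f x) (hg : DifferentiableAt ℝ g x) (v : E) :
    fderiv ℝ (fun y => f y * g y) x v = fderiv ℝ f x v * g x + f x * fderiv ℝ g x v := by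
  rw [fderiv_fun_mul hf hg, add_apply, smul_apply, smul_apply, smul_eq_mul, smul_eq_mul]
  ring

theorem fderiv_fun_rpow_const_apply (hf : DifferentiableAt ℝ f x) (hx : f x ≠ 0) (p : ℝ) (v : E) :
    fderiv ℝ (fun y => f y ^ p) x v = p * f x ^ (p - 1) * fderiv ℝ f x v := by
  rw [(hf.hasFDerivAt.rpow_const (Or.inl hx)).fderiv, smul_apply, smul_eq_mul]

theorem ContDiff.differentiable_fderiv_apply (hh : ContDiff ℝ 2 h) (v : E) :
    Differentiable ℝ (fun y => fderiv ℝ h y v) :=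
  ((hh.fderiv_right (m := 1) le_rfl).clm_apply contDiff_const).differentiable one_ne_zero

theorem ContDiff.fderiv_fderiv_apply_comm (hh : ContDiff ℝ 2 h) (x v w : E) :
    fderiv ℝ (fun y => fderiv ℝ h y v) x w = fderiv ℝ (fun y => fderiv ℝ h y w) x v := by
  have hD : DifferentiableAt ℝ (fderiv ℝ h) x :=
    (hh.fderiv_right (m := 1) le_rfl).differentiable one_ne_zero x
  rw [fderiv_clm_apply hD (differentiableAt_const v), fderiv_clm_apply hD (differentiableAt_const w)]
  simpa using (hh.contDiffAt.isSymmSndFDerivAt (by simp)) w v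

end DirectionalDerivative

theorem fderiv_apply_eq_pdX (f : ℝ × ℝ → ℝ) (q : ℝ × ℝ) : fderiv ℝ f q (1, 0) = pdX f q := rfl

theorem ContDiff.differentiable_pdX {f : ℝ × ℝ → ℝ} (hf : ContDiff ℝ 2 f) :
    Differentiable ℝ (pdX f) :=
  hf.differentiable_fderiv_apply (1, 0)

theorem ContDiff.pdT_pdX {f : ℝ × ℝ → ℝ} (hf : ContDiff ℝ 2 f) (q : ℝ × ℝ) :
    pdT (pdX f) q = pdX (pdT f) q :=
  hf.fderiv_fderiv_apply_comm q (1, 0) (0, 1)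

/-- `s = 1` gives the paper's `α`, `s = -1` its `β`. -/
noncomputable def gradVar (d s : ℝ) (z u m : ℝ × ℝ → ℝ) : ℝ × ℝ → ℝ :=
  fun q => pdX u q + s * (m q * pdX z q + 2 / (d + 1) * pdX m q * z q)

section LagrangianEuler

variable {d : ℝ} {z u m : ℝ × ℝ → ℝ}

theorem fderiv_gradVar_apply (s : ℝ) (hz : ContDiff ℝ 2 z) (hu : ContDiff ℝ 2 u)
    (hm : ContDiff ℝ 2 m) (q v : ℝ × ℝ) :
    fderiv ℝ (gradVar d s z u m) q v = fderiv ℝ (pdX u) q v + s * (fderiv ℝ m q v * pdX z q +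
      m q * fderiv ℝ (pdX z) q v +
        2 / (d + 1) * (fderiv ℝ (pdX m) q v * z q + pdX m q * fderiv ℝ z q v)) := by
  have := hz.differentiable two_ne_zero
  have := hm.differentiable two_ne_zero
  have := hu.differentiable_pdX
  have := hz.differentiable_pdX
  have := hm.differentiable_pdX
  unfold gradVar
  simp (disch := fun_prop) only [fderiv_fun_add, fderiv_const_mul, fderiv_fun_mul_apply,
    add_apply, smul_apply, smul_eq_mul]
  ring

theorem pdT_pdX_z_eq (hz : ContDiff ℝ 2 z) (hu : ContDiff ℝ 2 u)
    (hzt : ∀ q, pdT z q = -(z q ^ d * pdX u q)) {q : ℝ × ℝ} (hzq : z q ≠ 0) :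
    pdT (pdX z) q = -(d * z q ^ (d - 1) * pdX z q * pdX u q + z q ^ d * pdX (pdX u) q) := by
  have := hz.differentiable two_ne_zero
  have := hu.differentiable_pdX
  rw [hz.pdT_pdX, funext hzt, pdX]
  simp (disch := first | fun_prop (disch := exact Or.inl hzq) | exact hzq) only
    [fderiv_fun_neg, fderiv_fun_mul_apply, fderiv_fun_rpow_const_apply, neg_apply,
      fderiv_apply_eq_pdX]

theorem pdT_pdX_u_eq (hz : ContDiff ℝ 2 z) (hu : ContDiff ℝ 2 u) (hm : ContDiff ℝ 2 m)
    (hut : ∀ q, pdT u q =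
      -(m q * m q * z q ^ d * pdX z q) - 2 / (d + 1) * m q * z q ^ (1 + d) * pdX m q)
    {q : ℝ × ℝ} (hzq : z q ≠ 0) :
    pdT (pdX u) q =
      -((2 * m q * pdX m q * z q ^ d + m q * m q * (d * z q ^ (d - 1) * pdX z q)) * pdX z q +
          m q * m q * z q ^ d * pdX (pdX z) q) -
        2 / (d + 1) * ((pdX m q * z q ^ (1 + d) + m q * ((1 + d) * z q ^ d * pdX z q)) * pdX m q +
          m q * z q ^ (1 + d) * pdX (pdX m) q) := by
  have := hz.differentiable two_ne_zero
  have := hm.differentiable two_ne_zero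
  have := hz.differentiable_pdX
  have := hm.differentiable_pdX
  rw [hu.pdT_pdX, funext hut, pdX]
  simp (disch := first | fun_prop (disch := exact Or.inl hzq) | exact hzq) only
    [fderiv_fun_sub, fderiv_fun_neg, fderiv_const_mul, fderiv_fun_mul_apply,
      fderiv_fun_rpow_const_apply, add_sub_cancel_left, sub_apply, neg_apply, smul_apply,
      smul_eq_mul, fderiv_apply_eq_pdX]
  ring

theorem gradVar_riccati {s : ℝ} (hs : s = 1 ∨ s = -1) (hd₀ : d ≠ 0) (hd₁ : d + 1 ≠ 0)
    (hz : ContDiff ℝ 2 z) (hu : ContDiff ℝ 2 u) (hm : ContDiff ℝ 2 m)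
    (hmt : ∀ q, pdT m q = 0) (hzt : ∀ q, pdT z q = -(z q ^ d * pdX u q))
    (hut : ∀ q, pdT u q =
      -(m q * m q * z q ^ d * pdX z q) - 2 / (d + 1) * m q * z q ^ (1 + d) * pdX m q)
    {q : ℝ × ℝ} (hzq : z q ≠ 0) :
    pdT (gradVar d s z u m) q + s * (m q * z q ^ d) * pdX (gradVar d s z u m) q =
      d / 2 * z q ^ (d - 1) * (s * ((d - 1) / (d * (d + 1)) * z q * pdX m q) *
        (3 * gradVar d s z u m q + gradVar d (-s) z u m q) +
          gradVar d s z u m q * gradVar d (-s) z u m q - gradVar d s z u m q ^ 2) := by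
  have hmxt : pdT (pdX m) q = 0 := by
    rw [hm.pdT_pdX, funext hmt, pdX, fderiv_const_apply, zero_apply]
  have hAt : pdT (gradVar d s z u m) q = pdT (pdX u) q + s * (pdT m q * pdX z q +
      m q * pdT (pdX z) q + 2 / (d + 1) * (pdT (pdX m) q * z q + pdX m q * pdT z q)) :=
    fderiv_gradVar_apply s hz hu hm q (0, 1)
  have hAx : pdX (gradVar d s z u m) q = pdX (pdX u) q + s * (pdX m q * pdX z q +
      m q * pdX (pdX z) q + 2 / (d + 1) * (pdX (pdX m) q * z q + pdX m q * pdX z q)) :=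
    fderiv_gradVar_apply s hz hu hm q (1, 0)
  -- all powers of `z` go through the single atom `z q ^ (d - 1)`, making the identity rational
  have hzd : z q ^ d = z q ^ (d - 1) * z q := by
    rw [← Real.rpow_add_one hzq, sub_add_cancel]
  have hzd₁ : z q ^ (1 + d) = z q ^ (d - 1) * z q * z q := by
    rw [add_comm, Real.rpow_add_one hzq, hzd]
  rw [hAt, hAx, hmxt, pdT_pdX_z_eq hz hu hzt hzq, pdT_pdX_u_eq hz hu hm hut hzq, hmt, hzt,
    hzd₁, hzd]
  simp only [gradVar]
  field_simp
  rcases hs with rfl | rfl <;> ring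

end LagrangianEuler

theorem gamma_coeffs_eq {γ d : ℝ} (hγ : 1 < γ) (hd : d = (γ + 1) / (γ - 1)) :
    (γ + 1) / (2 * (γ - 1)) = d / 2 ∧ 2 / (γ - 1) = d - 1 ∧
      (γ - 1) / (γ * (γ + 1)) = (d - 1) / (d * (d + 1)) := by
  have hγ₁ : γ - 1 ≠ 0 := by linarith
  have hγ₀ : γ ≠ 0 := by linarith
  have hγ₂ : γ + 1 ≠ 0 := by linarith
  have hd₁ : d - 1 = 2 / (γ - 1) := by rw [hd]; field_simp; ring
  have hd₂ : d + 1 = 2 * γ / (γ - 1) := by rw [hd]; field_simp; ring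
  refine ⟨by rw [hd]; field_simp, hd₁.symm, ?_⟩
  rw [hd₁, hd₂, hd]
  field_simp

/-- The Riccati-type equations for the gradient variables `α` and `β` of `C²` solutions
of the compressible Euler equations in Lagrangian coordinates. -/
theorem riccati_equations (γ : ℝ) (hγ : 1 < γ) (d : ℝ) (hd : d = (γ + 1) / (γ - 1))
    (z u m : ℝ × ℝ → ℝ)
    (hz2 : ContDiff ℝ 2 z) (hu2 : ContDiff ℝ 2 u) (hm2 : ContDiff ℝ 2 m)
    (hzpos : ∀ q, 0 < z q) (hmpos : ∀ q, 0 < m q)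
    (c p : ℝ × ℝ → ℝ)
    (hc : ∀ q, c q = m q * z q ^ d)
    (hp : ∀ q, p q = (m q) ^ 2 * z q ^ (1 + d) / (d + 1))
    (hmt : ∀ q, pdT m q = 0)
    (heq1 : ∀ q, pdT z q + (c q / m q) * pdX u q = 0)
    (heq2 : ∀ q, pdT u q + m q * c q * pdX z q + 2 * (p q / m q) * pdX m q = 0)
    (α β k₁ k₂ : ℝ × ℝ → ℝ)
    (hα : ∀ q, α q = pdX u q + m q * pdX z q + (2 / (d + 1)) * pdX m q * z q)
    (hβ : ∀ q, β q = pdX u q - m q * pdX z q - (2 / (d + 1)) * pdX m q * z q)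
    (hk₁ : ∀ q, k₁ q = ((γ + 1) / (2 * (γ - 1))) * z q ^ (2 / (γ - 1)))
    (hk₂ : ∀ q, k₂ q = ((γ - 1) / (γ * (γ + 1))) * z q * pdX m q) :
    ∀ q, pdT α q + c q * pdX α q
          = k₁ q * (k₂ q * (3 * α q + β q) + α q * β q - (α q) ^ 2)
      ∧ pdT β q - c q * pdX β q
          = k₁ q * (-(k₂ q) * (α q + 3 * β q) + α q * β q - (β q) ^ 2) := by
  obtain ⟨hk₁d, hexp, hk₂d⟩ := gamma_coeffs_eq hγ hd
  have hd₁ : 1 < d := by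
    rw [hd, lt_div_iff₀ (by linarith)]
    linarith
  have hzt : ∀ q, pdT z q = -(z q ^ d * pdX u q) := fun q => by
    have := heq1 q
    rw [hc q, mul_div_cancel_left₀ _ (hmpos q).ne'] at this
    linarith
  have hut : ∀ q, pdT u q =
      -(m q * m q * z q ^ d * pdX z q) - 2 / (d + 1) * m q * z q ^ (1 + d) * pdX m q := fun q => by
    have := heq2 q
    rw [hc q, hp q] at this
    field_simp [(hmpos q).ne'] at this ⊢
    linarith
  have hαs : α = gradVar d 1 z u m := funext fun q => by rw [hα q, gradVar]; ring
  have hβs : β = gradVar d (-1) z u m := funext fun q => by rw [hβ q, gradVar]; ring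
  have riccati (s : ℝ) (hs : s = 1 ∨ s = -1) (q : ℝ × ℝ) :=
    gradVar_riccati hs (by positivity) (by positivity) hz2 hu2 hm2 hmt hzt hut (hzpos q).ne'
  intro q
  have hα' := riccati 1 (.inl rfl) q
  have hβ' := riccati (-1) (.inr rfl) q
  rw [neg_neg] at hβ'
  rw [hk₁ q, hk₂ q, hc q, hk₁d, hexp, hk₂d, hαs, hβs]
  constructor
  · linear_combination hα'
  · linear_combination hβ'
end

section
/- Let t₀ < t₁ be reals, let k₁, k₂ : [t₀, t₁] → ℝ be continuous with k₁(t) ≥ 0 and k₂(t) ≥ 0 for all t, and let α : [t₀, t₁] → ℝ be differentiable with α(t₀) > 0 and α'(t) ≥ 3·k₁(t)·k₂(t)·α(t) − k₁(t)·α(t)² for all t ∈ [t₀, t₁]. Then α(t) > 0 for all t ∈ [t₀, t₁], and moreover α(t) ≥ e^{∫_{t₀}^{t} 3k₁k₂ ds}·α(t₀) / ( 1 + α(t₀)·∫_{t₀}^{t} k₁(s)·e^{∫_{t₀}^{s} 3k₁k₂ dτ} ds ). -/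
/-!
The bound is the exact solution `β = α(t₀) E / D` of the Riccati equation `β' = a β - b β²`,
where `E = exp (∫ a)` and `D = 1 + α(t₀) ∫ b E`. Rather than dividing by `α`, which is not yet
known to be positive, compare through `w = α D - α(t₀) E`: it vanishes at `t₀` and satisfies
the linear inequality `w' - (a - b α) w = D (α' - a α + b α²) ≥ 0`, so an integrating factor
gives `w ≥ 0`. Since `D ≥ 1`, this yields both `α > 0` and `α ≥ β`.
-/

open intervalIntegral Set

section Primitive

variable {c : ℝ → ℝ} {a b : ℝ}

lemma ContinuousOn.continuousOn_primitive_interval (hc : ContinuousOn c (Icc a b)) :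
    ContinuousOn (fun x => ∫ s in a..x, c s) (Icc a b) := by
  rcases le_or_gt a b with hab | hab
  · rw [← uIcc_of_le hab] at hc ⊢
    exact intervalIntegral.continuousOn_primitive_interval (hc.integrableOn_compact isCompact_uIcc)
  · simp [Icc_eq_empty_of_lt hab]

lemma ContinuousOn.hasDerivAt_primitive_of_mem_Ioo (hc : ContinuousOn c (Icc a b)) {t : ℝ}
    (ht : t ∈ Ioo a b) : HasDerivAt (fun x => ∫ s in a..x, c s) (c t) t :=
  integral_hasDerivAt_right
    ((hc.mono (Icc_subset_Icc_right ht.2.le)).intervalIntegrable_of_Icc ht.1.le)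
    ((hc.mono Ioo_subset_Icc_self).stronglyMeasurableAtFilter isOpen_Ioo t ht)
    (hc.continuousAt (Icc_mem_nhds ht.1 ht.2))

end Primitive

/-- `exp (-∫ c) * f` is nondecreasing. -/
theorem nonneg_of_mul_le_deriv {f c : ℝ → ℝ} {a b : ℝ} (hc : ContinuousOn c (Icc a b))
    (hf : ContinuousOn f (Icc a b)) (hfd : ∀ t ∈ Ioo a b, DifferentiableAt ℝ f t)
    (hle : ∀ t ∈ Ioo a b, c t * f t ≤ deriv f t) (ha : 0 ≤ f a) :
    ∀ t ∈ Icc a b, 0 ≤ f t := by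
  set C := fun x => ∫ s in a..x, c s
  have hderiv : ∀ t ∈ Ioo a b, HasDerivAt (fun x => Real.exp (-C x) * f x)
      (Real.exp (-C t) * (deriv f t - c t * f t)) t := fun t ht => by
    have hC : HasDerivAt (fun x => -C x) (-c t) t := (hc.hasDerivAt_primitive_of_mem_Ioo ht).neg
    exact (hC.exp.mul (hfd t ht).hasDerivAt).congr_deriv (by ring)
  have hmono : MonotoneOn (fun x => Real.exp (-C x) * f x) (Icc a b) := by
    refine monotoneOn_of_deriv_nonneg (convex_Icc a b)
      (hc.continuousOn_primitive_interval.neg.rexp.mul hf) ?_ ?_ <;> rw [interior_Icc]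
    · exact fun t ht => (hderiv t ht).differentiableAt.differentiableWithinAt
    · intro t ht
      rw [(hderiv t ht).deriv]
      exact mul_nonneg (Real.exp_pos _).le (sub_nonneg.2 (hle t ht))
  intro t ht
  have h := hmono (left_mem_Icc.2 (ht.1.trans ht.2)) ht ht.1
  simp only [C, integral_same, neg_zero, Real.exp_zero, one_mul] at h
  exact nonneg_of_mul_nonneg_right (ha.trans h) (Real.exp_pos _)

theorem riccati_lower_bound {a b α : ℝ → ℝ} {t₀ t₁ : ℝ} (ha : ContinuousOn a (Icc t₀ t₁))
    (hb : ContinuousOn b (Icc t₀ t₁)) (hb_nonneg : ∀ t ∈ Icc t₀ t₁, 0 ≤ b t)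
    (hα : ContinuousOn α (Icc t₀ t₁)) (hαd : ∀ t ∈ Ioo t₀ t₁, DifferentiableAt ℝ α t)
    (hineq : ∀ t ∈ Ioo t₀ t₁, a t * α t - b t * α t ^ 2 ≤ deriv α t) (hα₀ : 0 < α t₀) :
    ∀ t ∈ Icc t₀ t₁, 0 < α t ∧
      α t ≥ Real.exp (∫ s in t₀..t, a s) * α t₀ /
        (1 + α t₀ * ∫ s in t₀..t, b s * Real.exp (∫ τ in t₀..s, a τ)) := by
  set E := fun t => Real.exp (∫ s in t₀..t, a s)
  set g := fun t => ∫ s in t₀..t, b s * E s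
  have hE : ContinuousOn E (Icc t₀ t₁) := ha.continuousOn_primitive_interval.rexp
  have hD : ∀ t ∈ Icc t₀ t₁, 1 ≤ 1 + α t₀ * g t := fun t ht => by
    have : 0 ≤ g t := integral_nonneg ht.1 fun s hs =>
      mul_nonneg (hb_nonneg s ⟨hs.1, hs.2.trans ht.2⟩) (Real.exp_pos _).le
    exact le_add_of_nonneg_right (mul_nonneg hα₀.le this)
  have hw : ∀ t ∈ Icc t₀ t₁, 0 ≤ α t * (1 + α t₀ * g t) - α t₀ * E t := by
    have hderiv : ∀ t ∈ Ioo t₀ t₁, HasDerivAt (fun t => α t * (1 + α t₀ * g t) - α t₀ * E t)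
        (deriv α t * (1 + α t₀ * g t) + α t * (α t₀ * (b t * E t)) - α t₀ * (E t * a t)) t :=
      fun t ht => ((hαd t ht).hasDerivAt.mul
        (((hb.mul hE).hasDerivAt_primitive_of_mem_Ioo ht).const_mul _ |>.const_add 1)).sub
        ((ha.hasDerivAt_primitive_of_mem_Ioo ht).exp.const_mul _)
    refine nonneg_of_mul_le_deriv (c := fun t => a t - b t * α t) (ha.sub (hb.mul hα))
      ((hα.mul (continuousOn_const.add (continuousOn_const.mul
        (hb.mul hE).continuousOn_primitive_interval))).sub (continuousOn_const.mul hE))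
      (fun t ht => (hderiv t ht).differentiableAt) (fun t ht => ?_) (by simp [g, E])
    rw [(hderiv t ht).deriv]
    linear_combination mul_le_mul_of_nonneg_left (hineq t ht)
      (zero_le_one.trans (hD t (Ioo_subset_Icc_self ht)))
  intro t ht
  have hpos : 0 < α t * (1 + α t₀ * g t) := by
    nlinarith [hw t ht, mul_pos hα₀ (Real.exp_pos (∫ s in t₀..t, a s))]
  refine ⟨pos_of_mul_pos_left hpos (by linarith [hD t ht]), ?_⟩
  rw [ge_iff_le, div_le_iff₀ (by linarith [hD t ht])]
  linarith [hw t ht]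

theorem riccati_comparison_general (t₀ t₁ : ℝ) (k₁ k₂ α : ℝ → ℝ)
    (hk₁c : ContinuousOn k₁ (Set.Icc t₀ t₁)) (hk₂c : ContinuousOn k₂ (Set.Icc t₀ t₁))
    (hk₁ : ∀ t ∈ Set.Icc t₀ t₁, 0 ≤ k₁ t)
    (hαdiff : ∀ t ∈ Set.Icc t₀ t₁, DifferentiableAt ℝ α t)
    (hα0 : 0 < α t₀)
    (hineq : ∀ t ∈ Set.Icc t₀ t₁,
      deriv α t ≥ 3 * k₁ t * k₂ t * α t - k₁ t * (α t) ^ 2) :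
    ∀ t ∈ Set.Icc t₀ t₁, 0 < α t ∧
      α t ≥ Real.exp (∫ s in t₀..t, 3 * k₁ s * k₂ s) * α t₀ /
        (1 + α t₀ * ∫ s in t₀..t, k₁ s * Real.exp (∫ τ in t₀..s, 3 * k₁ τ * k₂ τ)) :=
  riccati_lower_bound ((continuousOn_const.mul hk₁c).mul hk₂c) hk₁c hk₁
    (fun t ht => (hαdiff t ht).continuousAt.continuousWithinAt)
    (fun t ht => hαdiff t (Ioo_subset_Icc_self ht)) (fun t ht => hineq t (Ioo_subset_Icc_self ht))
    hα0

/-- Riccati comparison: if `α' ≥ 3k₁k₂α − k₁α²` with nonnegative continuous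
coefficients and `α(t₀) > 0`, then `α` stays positive and satisfies an explicit
lower bound. -/
theorem riccati_comparison (t₀ t₁ : ℝ) (ht : t₀ < t₁) (k₁ k₂ α : ℝ → ℝ)
    (hk₁c : ContinuousOn k₁ (Set.Icc t₀ t₁)) (hk₂c : ContinuousOn k₂ (Set.Icc t₀ t₁))
    (hk₁ : ∀ t ∈ Set.Icc t₀ t₁, 0 ≤ k₁ t) (hk₂ : ∀ t ∈ Set.Icc t₀ t₁, 0 ≤ k₂ t)
    (hαdiff : ∀ t ∈ Set.Icc t₀ t₁, DifferentiableAt ℝ α t)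
    (hα0 : 0 < α t₀)
    (hineq : ∀ t ∈ Set.Icc t₀ t₁,
      deriv α t ≥ 3 * k₁ t * k₂ t * α t - k₁ t * (α t) ^ 2) :
    ∀ t ∈ Set.Icc t₀ t₁, 0 < α t ∧
      α t ≥ Real.exp (∫ s in t₀..t, 3 * k₁ s * k₂ s) * α t₀ /
        (1 + α t₀ * ∫ s in t₀..t, k₁ s * Real.exp (∫ τ in t₀..s, 3 * k₁ τ * k₂ τ)) :=
  riccati_comparison_general t₀ t₁ k₁ k₂ α hk₁c hk₂c hk₁ hαdiff hα0 hineq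
end

section
/- Let d > 1, let z₀, m₀ > 0, and let Z be real with 1 < Z < d^{1/(d−1)}. Set z₁ = Z·z₀ and m₁ = f(Z)·m₀ where f(Z) = √( (Z^{d−1} − 1/d) / (Z^{d+1} − Z^{2d}/d) ), and define p_i = m_i²·z_i^{1+d}/(d+1) and τ_i = z_i^{1−d}/(d−1). Let u₀, u₁, ξ be reals satisfying (u₁ − u₀)² = (p₁ − p₀)·(τ₀ − τ₁) and ξ²·(τ₀ − τ₁) = (p₁ − p₀). Then (u₁ − u₀)² = m₀²·z₀²·g(Z)² and ξ² = m₀²·z₀^{2d}·h(Z)², where g(Z) = (1/√(d²−1))·√( (f(Z)²·Z^{1+d} − 1)·(1 − Z^{1−d}) ) and h(Z) = √((d−1)/(d+1))·√( (f(Z)²·Z^{1+d} − 1)/(1 − Z^{1−d}) ). -/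
/-!
Write `w = Z^(d-1)`, so that `1 < w < d`. The Hugoniot relation gives
`f(Z)² Z^(1+d) = (d w - 1)/(d - w)`, hence `A := f(Z)² Z^(1+d) - 1 = (d+1)(w-1)/(d-w) > 0`, and
`B := 1 - Z^(1-d) > 0`. The jumps factor as `[p] = m₀² z₀^(1+d) A/(d+1)` and
`[-τ] = z₀^(1-d) B/(d-1)`; their product and quotient are `m₀² z₀² g(Z)²` and `m₀² z₀^(2d) h(Z)²`.
-/

open Real

section PolytropicJumps

variable {z₀ Z : ℝ}

theorem pressure_jump (d m₀ f : ℝ) (hz₀ : 0 ≤ z₀) (hZ : 0 ≤ Z) :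
    (f * m₀) ^ 2 * (Z * z₀) ^ (1 + d) / (d + 1) - m₀ ^ 2 * z₀ ^ (1 + d) / (d + 1)
      = m₀ ^ 2 * z₀ ^ (1 + d) * (f ^ 2 * Z ^ (1 + d) - 1) / (d + 1) := by
  rw [mul_rpow hZ hz₀]
  ring

theorem specificVolume_jump (d : ℝ) (hz₀ : 0 ≤ z₀) (hZ : 0 ≤ Z) :
    z₀ ^ (1 - d) / (d - 1) - (Z * z₀) ^ (1 - d) / (d - 1)
      = z₀ ^ (1 - d) * (1 - Z ^ (1 - d)) / (d - 1) := by
  rw [mul_rpow hZ hz₀]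
  ring

theorem rpow_one_add_mul_rpow_one_sub (d : ℝ) (hz₀ : 0 < z₀) :
    z₀ ^ (1 + d) * z₀ ^ (1 - d) = z₀ ^ 2 := by
  rw [← rpow_add hz₀, ← rpow_two]
  ring_nf

theorem rpow_one_add_div_rpow_one_sub (d : ℝ) (hz₀ : 0 < z₀) :
    z₀ ^ (1 + d) / z₀ ^ (1 - d) = z₀ ^ (2 * d) := by
  rw [← rpow_sub hz₀]
  ring_nf

end PolytropicJumps

section Hugoniot

variable {d Z : ℝ}

theorem hugoniot_sq_mul_rpow_eq (hd : 0 < d) (hZ : 0 < Z)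
    (hw₁ : 1 / d < Z ^ (d - 1)) (hw₂ : Z ^ (d - 1) < d) :
    sqrt ((Z ^ (d - 1) - 1 / d) / (Z ^ (d + 1) - Z ^ (2 * d) / d)) ^ 2 * Z ^ (1 + d)
      = (d * Z ^ (d - 1) - 1) / (d - Z ^ (d - 1)) := by
  set w := Z ^ (d - 1) with hw
  have hplus : Z ^ (d + 1) = w * Z ^ 2 := by
    rw [hw, ← rpow_two, ← rpow_add hZ]
    ring_nf
  have htwo : Z ^ (2 * d) = w ^ 2 * Z ^ 2 := by
    rw [hw, ← rpow_two, ← rpow_two, ← rpow_mul hZ.le, ← rpow_add hZ]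
    ring_nf
  have hw₀ : 0 < w := by positivity
  have hdw : 0 < d - w := by linarith
  have hden : 0 < Z ^ (d + 1) - Z ^ (2 * d) / d := by
    rw [hplus, htwo, show w * Z ^ 2 - w ^ 2 * Z ^ 2 / d = w * Z ^ 2 * (d - w) / d by field_simp]
    positivity
  rw [sq_sqrt (div_nonneg (by linarith) hden.le), add_comm 1 d, hplus, htwo]
  field_simp

theorem one_lt_hugoniot_sq_mul_rpow (hd : 1 < d) (hZ₁ : 1 < Z) (hZ₂ : Z ^ (d - 1) < d) :
    1 < sqrt ((Z ^ (d - 1) - 1 / d) / (Z ^ (d + 1) - Z ^ (2 * d) / d)) ^ 2 * Z ^ (1 + d) := by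
  have hw : 1 < Z ^ (d - 1) := one_lt_rpow hZ₁ (by linarith)
  have hd' : 1 / d < 1 := (div_lt_one (by linarith)).2 hd
  rw [hugoniot_sq_mul_rpow_eq (by linarith) (by linarith) (by linarith) hZ₂,
    one_lt_div (by linarith)]
  nlinarith

end Hugoniot

section RankineHugoniot

variable {d : ℝ}

theorem jump_sq_eq (hd : 1 < d) (a b A B : ℝ) (hAB : 0 ≤ A * B) :
    a * A / (d + 1) * (b * B / (d - 1)) = a * b * (1 / sqrt (d ^ 2 - 1) * sqrt (A * B)) ^ 2 := by
  have hd₂ : 0 < d ^ 2 - 1 := by nlinarith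
  rw [mul_pow, div_pow, sq_sqrt hd₂.le, sq_sqrt hAB, show d ^ 2 - 1 = (d + 1) * (d - 1) by ring]
  field_simp

theorem speed_sq_eq (hd : 1 < d) {a b A B ξ : ℝ} (hb : 0 < b) (hA : 0 ≤ A) (hB : 0 < B)
    (h : ξ ^ 2 * (b * B / (d - 1)) = a * A / (d + 1)) :
    ξ ^ 2 = a / b * (sqrt ((d - 1) / (d + 1)) * sqrt (A / B)) ^ 2 := by
  have hd₁ : 0 < d - 1 := by linarith
  rw [mul_pow, sq_sqrt (by positivity), sq_sqrt (by positivity)]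
  field_simp at h ⊢
  linarith

end RankineHugoniot

theorem shock_curve_parametrization_general (d z₀ m₀ Z : ℝ) (hd : 1 < d)
    (hz₀ : 0 < z₀) (hZ₁ : 1 < Z) (hZ₂ : Z < d ^ (1 / (d - 1)))
    (fZ gZ hZ z₁ m₁ p₀ p₁ τ₀ τ₁ u₀ u₁ ξ : ℝ)
    (hf : fZ = Real.sqrt ((Z ^ (d - 1) - 1 / d) / (Z ^ (d + 1) - Z ^ (2 * d) / d)))
    (hz₁ : z₁ = Z * z₀) (hm₁ : m₁ = fZ * m₀)
    (hp₀ : p₀ = m₀ ^ 2 * z₀ ^ (1 + d) / (d + 1)) (hp₁ : p₁ = m₁ ^ 2 * z₁ ^ (1 + d) / (d + 1))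
    (hτ₀ : τ₀ = z₀ ^ (1 - d) / (d - 1)) (hτ₁ : τ₁ = z₁ ^ (1 - d) / (d - 1))
    (hu : (u₁ - u₀) ^ 2 = (p₁ - p₀) * (τ₀ - τ₁))
    (hξ : ξ ^ 2 * (τ₀ - τ₁) = p₁ - p₀)
    (hg : gZ = (1 / Real.sqrt (d ^ 2 - 1)) *
      Real.sqrt ((fZ ^ 2 * Z ^ (1 + d) - 1) * (1 - Z ^ (1 - d))))
    (hh : hZ = Real.sqrt ((d - 1) / (d + 1)) *
      Real.sqrt ((fZ ^ 2 * Z ^ (1 + d) - 1) / (1 - Z ^ (1 - d)))) :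
    (u₁ - u₀) ^ 2 = m₀ ^ 2 * z₀ ^ 2 * gZ ^ 2
      ∧ ξ ^ 2 = m₀ ^ 2 * z₀ ^ (2 * d) * hZ ^ 2 := by
  have hZ₀ : 0 ≤ Z := by linarith
  have hw : Z ^ (d - 1) < d := by
    rwa [one_div, lt_rpow_inv_iff_of_pos hZ₀ (by linarith) (by linarith)] at hZ₂
  have hA : 0 < fZ ^ 2 * Z ^ (1 + d) - 1 := hf ▸ sub_pos.2 (one_lt_hugoniot_sq_mul_rpow hd hZ₁ hw)
  have hB : 0 < 1 - Z ^ (1 - d) := sub_pos.2 (rpow_lt_one_of_one_lt_of_neg hZ₁ (by linarith))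
  have hp : p₁ - p₀ = m₀ ^ 2 * z₀ ^ (1 + d) * (fZ ^ 2 * Z ^ (1 + d) - 1) / (d + 1) := by
    rw [hp₁, hp₀, hm₁, hz₁, pressure_jump d m₀ fZ hz₀.le hZ₀]
  have hτ : τ₀ - τ₁ = z₀ ^ (1 - d) * (1 - Z ^ (1 - d)) / (d - 1) := by
    rw [hτ₀, hτ₁, hz₁, specificVolume_jump d hz₀.le hZ₀]
  constructor
  · rw [hu, hp, hτ, jump_sq_eq hd _ _ _ _ (mul_pos hA hB).le, ← hg, mul_assoc (m₀ ^ 2),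
      rpow_one_add_mul_rpow_one_sub d hz₀]
  · rw [hp, hτ] at hξ
    rw [speed_sq_eq hd (rpow_pos_of_pos hz₀ _) hA.le hB hξ, ← hh, mul_div_assoc,
      rpow_one_add_div_rpow_one_sub d hz₀]

/-- Parametrization of the shock curves: the jumps of velocity and the shock speed
are given by `[u]² = m₀²·z₀²·g(Z)²` and `ξ² = m₀²·z₀^(2d)·h(Z)²`. -/
theorem shock_curve_parametrization (d z₀ m₀ Z : ℝ) (hd : 1 < d)
    (hz₀ : 0 < z₀) (hm₀ : 0 < m₀) (hZ₁ : 1 < Z) (hZ₂ : Z < d ^ (1 / (d - 1)))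
    (fZ gZ hZ z₁ m₁ p₀ p₁ τ₀ τ₁ u₀ u₁ ξ : ℝ)
    (hf : fZ = Real.sqrt ((Z ^ (d - 1) - 1 / d) / (Z ^ (d + 1) - Z ^ (2 * d) / d)))
    (hz₁ : z₁ = Z * z₀) (hm₁ : m₁ = fZ * m₀)
    (hp₀ : p₀ = m₀ ^ 2 * z₀ ^ (1 + d) / (d + 1)) (hp₁ : p₁ = m₁ ^ 2 * z₁ ^ (1 + d) / (d + 1))
    (hτ₀ : τ₀ = z₀ ^ (1 - d) / (d - 1)) (hτ₁ : τ₁ = z₁ ^ (1 - d) / (d - 1))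
    (hu : (u₁ - u₀) ^ 2 = (p₁ - p₀) * (τ₀ - τ₁))
    (hξ : ξ ^ 2 * (τ₀ - τ₁) = p₁ - p₀)
    (hg : gZ = (1 / Real.sqrt (d ^ 2 - 1)) *
      Real.sqrt ((fZ ^ 2 * Z ^ (1 + d) - 1) * (1 - Z ^ (1 - d))))
    (hh : hZ = Real.sqrt ((d - 1) / (d + 1)) *
      Real.sqrt ((fZ ^ 2 * Z ^ (1 + d) - 1) / (1 - Z ^ (1 - d)))) :
    (u₁ - u₀) ^ 2 = m₀ ^ 2 * z₀ ^ 2 * gZ ^ 2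
      ∧ ξ ^ 2 = m₀ ^ 2 * z₀ ^ (2 * d) * hZ ^ 2 :=
  shock_curve_parametrization_general d z₀ m₀ Z hd hz₀ hZ₁ hZ₂ fZ gZ hZ z₁ m₁ p₀ p₁ τ₀ τ₁ u₀ u₁ ξ hf
    hz₁ hm₁ hp₀ hp₁ hτ₀ hτ₁ hu hξ hg hh
end

section
/- Let m > 0 and Q > 0 be reals, and let u, z : ℕ → ℝ be sequences satisfying, for all k ≥ 1: u_{2k} − u_{2k+1} = m·(z_{2k} − z_{2k+1}), u_{2k} − u_{2k−1} = m·(z_{2k−1} − z_{2k}), u_{2k+2} − u_{2k} = (m/Q)·(z_{2k+2} − z_{2k}), and u_{2k+1} − u_{2k−1} = (m/Q)·(z_{2k−1} − z_{2k+1}). Then for all n ≥ 2: (1 + Q)·z_{n+1} = 2·Q·z_n + (1 − Q)·z_{n−1}. -/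
/-!
Adding the two simple-wave relations inside the strip at the `n`-th reflection expresses the
change of `u` between reflections `n - 1` and `n + 1` as `m` times the second difference
`z_{n-1} - 2 z_n + z_{n+1}`; the relation outside the strip expresses the same change as
`m / Q` times `±(z_{n-1} - z_{n+1})`. Equating the two and cancelling `m` gives
`Q (z_{n-1} - 2 z_n + z_{n+1}) = z_{n-1} - z_{n+1}`, which is the recursion.
-/

theorem recursion_of_second_difference {K : Type*} [Field K] {m Q a b c : K}
    (hm : m ≠ 0) (hQ : Q ≠ 0) (h : m * (a - 2 * b + c) = m / Q * (a - c)) :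
    (1 + Q) * c = 2 * Q * b + (1 - Q) * a := by
  field_simp at h
  linear_combination h

/-- The reflected-wave traces between two opposite contacts satisfy the linear
difference equation `(1+Q)·z_{n+1} = 2Q·z_n + (1−Q)·z_{n−1}`. -/
theorem reflection_recursion (m Q : ℝ) (hm : 0 < m) (hQ : 0 < Q)
    (u z : ℕ → ℝ)
    (h1 : ∀ k ≥ 1, u (2 * k) - u (2 * k + 1) = m * (z (2 * k) - z (2 * k + 1)))
    (h2 : ∀ k ≥ 1, u (2 * k) - u (2 * k - 1) = m * (z (2 * k - 1) - z (2 * k)))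
    (h3 : ∀ k ≥ 1, u (2 * k + 2) - u (2 * k) = (m / Q) * (z (2 * k + 2) - z (2 * k)))
    (h4 : ∀ k ≥ 1, u (2 * k + 1) - u (2 * k - 1) = (m / Q) * (z (2 * k - 1) - z (2 * k + 1))) :
    ∀ n ≥ 2, (1 + Q) * z (n + 1) = 2 * Q * z n + (1 - Q) * z (n - 1) := by
  intro n hn
  apply recursion_of_second_difference hm.ne' hQ.ne'
  obtain ⟨k, rfl | rfl⟩ := Nat.even_or_odd' n
  · have hk : k ≥ 1 := by omega
    linear_combination h1 k hk - h2 k hk + h4 k hk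
  · have hk : k ≥ 1 := by omega
    have h2' := h2 (k + 1) (by omega)
    rw [show 2 * (k + 1) - 1 = 2 * k + 1 by omega, show 2 * (k + 1) = 2 * k + 2 by ring] at h2'
    rw [Nat.add_sub_cancel, show 2 * k + 1 + 1 = 2 * k + 2 by rfl]
    linear_combination h2' - h1 k hk - h3 k hk
end

section
/- Let m, M > 0 and Q > 1 be reals, let z₀, z₁, z_b, z_∞, Z_{−∞} be positive reals, and let U_∞, U_{−∞}, U_a, u_b, u_c be reals satisfying: U_∞ = U_a; M·z_∞ = (m/Q)·z₀; u_b = u_c; m·z₁ = Q·M·z_b; u_b − U_{−∞} = M·(Z_{−∞} − z_b); U_a − u_c = m·(z₀ − z₁); and z₁ = ((Q−1)/(Q+1))·z₀. Then U_∞ − U_{−∞} = M·Z_{−∞} + M·z_∞, i.e. the Vacuum Condition holds with equality. -/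
/-- At the bifurcation value `ζ = 0` of the two-contact reflection problem, the
Vacuum Condition holds with equality. -/
theorem vacuum_condition_equality (m M Q z₀ z₁ zb zInf ZNegInf : ℝ)
    (UInf UNegInf Ua ub uc : ℝ)
    (hm : 0 < m) (hM : 0 < M) (hQ : 1 < Q)
    (hz₀ : 0 < z₀) (hz₁ : 0 < z₁) (hzb : 0 < zb) (hzInf : 0 < zInf) (hZN : 0 < ZNegInf)
    (h1 : UInf = Ua)
    (h2 : M * zInf = (m / Q) * z₀)
    (h3 : ub = uc)
    (h4 : m * z₁ = Q * (M * zb))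
    (h5 : ub - UNegInf = M * (ZNegInf - zb))
    (h6 : Ua - uc = m * (z₀ - z₁))
    (h7 : z₁ = ((Q - 1) / (Q + 1)) * z₀) :
    UInf - UNegInf = M * ZNegInf + M * zInf := by
  have hQ0 : Q ≠ 0 := by positivity
  have hQ1 : Q + 1 ≠ 0 := by positivity
  field_simp at h2 h4 h7 ⊢
  nlinarith [h1, h3, h5, h6, h2, h4, h7, mul_pos hm hz₀]
end

section
/- Let d > 1, m > 0, z₀ > 0, 0 < η < 1, and x₁ > x₀ be reals. Set z_n = η^n·z₀, c(z) = m·z^d, c₀ = m·z₀^d, and let t : ℕ → ℝ with t₀ = 0 satisfy (x₁ − x₀)/c(z_n) ≤ t_{n+1} − t_n ≤ (x₁ − x₀)/c(z_{n+1}) for all n ≥ 0. Then for all n ≥ 1: z₀·( 1 + (t_n·c₀/(x₁ − x₀))·(η^{−d} − 1) )^{−1/d} ≤ z_n ≤ z₀·( 1 + (t_n·c₀/(x₁ − x₀))·(1 − η^d) )^{−1/d}. In particular z_n = O(1)·(1 + t_n)^{−1/d}. -/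
/-!
Put `q = η^(-d) > 1`. Since `c(z_n) = c₀·q^(-n)`, the normalised time `τ_n = t_n·c₀/(x₁ − x₀)`
has increments between `q^n` and `q^(n+1)`, so `τ_n` lies between the geometric sums
`∑_{i<n} q^i` and `∑_{i<n} q^(i+1)`. Using `(∑_{i<n} q^i)(q − 1) = q^n − 1` this reads
`1 + τ_n (1 − q⁻¹) ≤ q^n ≤ 1 + τ_n (q − 1)`, and `z_n = z₀·(q^n)^(-1/d)` with `t ↦ t^(-1/d)`
antitone turns it into the two-sided bound. For the `O(1)` bound, `1 + a t ≥ min a 1 · (1 + t)`.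
-/

open Finset

section Increments

variable {G : Type*} [AddCommGroup G] [PartialOrder G] [IsOrderedAddMonoid G] {f s : ℕ → G}

theorem sum_range_le_of_le_sub (hs : s 0 = 0) (h : ∀ i, f i ≤ s (i + 1) - s i) (n : ℕ) :
    ∑ i ∈ range n, f i ≤ s n := by
  have := sum_le_sum (s := range n) fun i _ => h i
  rwa [sum_range_sub, hs, sub_zero] at this

theorem le_sum_range_of_sub_le (hs : s 0 = 0) (h : ∀ i, s (i + 1) - s i ≤ f i) (n : ℕ) :
    s n ≤ ∑ i ∈ range n, f i := by
  have := sum_le_sum (s := range n) fun i _ => h i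
  rwa [sum_range_sub, hs, sub_zero] at this

end Increments

section GeomSum

variable {q τ : ℝ}

theorem pow_le_one_add_mul_sub_one_of_geom_sum_le (hq : 1 ≤ q) {n : ℕ}
    (h : ∑ i ∈ range n, q ^ i ≤ τ) : q ^ n ≤ 1 + τ * (q - 1) := by
  have := mul_le_mul_of_nonneg_right h (sub_nonneg.mpr hq)
  rw [geom_sum_mul] at this
  linarith

theorem one_add_mul_one_sub_inv_le_pow_of_le_geom_sum (hq : 1 ≤ q) {n : ℕ}
    (h : τ ≤ ∑ i ∈ range n, q ^ (i + 1)) : 1 + τ * (1 - q⁻¹) ≤ q ^ n := by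
  have hq₀ : q ≠ 0 := by positivity
  have key : (∑ i ∈ range n, q ^ (i + 1)) * (1 - q⁻¹) = q ^ n - 1 := by
    simp only [pow_succ, ← sum_mul, ← geom_sum_mul]
    field_simp
  have := mul_le_mul_of_nonneg_right h (sub_nonneg.mpr (inv_le_one_of_one_le₀ hq))
  linarith

theorem geom_bounds_of_increments_mul (hq : 1 ≤ q) {κ : ℝ} (hκ : 0 < κ) {t : ℕ → ℝ} (ht0 : t 0 = 0)
    (ht : ∀ n, κ⁻¹ * q ^ n ≤ t (n + 1) - t n ∧ t (n + 1) - t n ≤ κ⁻¹ * q ^ (n + 1)) (n : ℕ) :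
    q ^ n ≤ 1 + t n * κ * (q - 1) ∧ 1 + t n * κ * (1 - q⁻¹) ≤ q ^ n := by
  have hscale k : κ⁻¹ * q ^ k * κ = q ^ k := by field_simp
  have hτ k : q ^ k ≤ t (k + 1) * κ - t k * κ ∧ t (k + 1) * κ - t k * κ ≤ q ^ (k + 1) := by
    rw [← sub_mul]
    exact ⟨hscale k ▸ mul_le_mul_of_nonneg_right (ht k).1 hκ.le,
      hscale (k + 1) ▸ mul_le_mul_of_nonneg_right (ht k).2 hκ.le⟩
  have hτ0 : t 0 * κ = 0 := by rw [ht0, zero_mul]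
  exact ⟨pow_le_one_add_mul_sub_one_of_geom_sum_le hq
      (sum_range_le_of_le_sub (s := fun k => t k * κ) hτ0 (fun k => (hτ k).1) n),
    one_add_mul_one_sub_inv_le_pow_of_le_geom_sum hq
      (le_sum_range_of_sub_le (s := fun k => t k * κ) hτ0 (fun k => (hτ k).2) n)⟩

end GeomSum

namespace Real

variable {η d : ℝ}

theorem rpow_neg_pow_rpow_neg_one_div (hη : 0 ≤ η) (hd : d ≠ 0) (n : ℕ) :
    ((η ^ (-d)) ^ n) ^ (-1 / d) = η ^ n := by
  rw [rpow_pow_comm hη, show -1 / d = (-d)⁻¹ by field_simp,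
    rpow_rpow_inv (pow_nonneg hη n) (neg_ne_zero.mpr hd)]

theorem pow_mul_rpow_eq_div (hη : 0 ≤ η) {z : ℝ} (hz : 0 ≤ z) (d : ℝ) (n : ℕ) :
    (η ^ n * z) ^ d = z ^ d / (η ^ (-d)) ^ n := by
  rw [mul_rpow (pow_nonneg hη n) hz, rpow_pow_comm hη, rpow_neg (pow_nonneg hη n),
    div_inv_eq_mul, mul_comm]

theorem one_add_mul_rpow_le_min_rpow_mul {a t p : ℝ} (ha : 0 < a) (ht : 0 ≤ t) (hp : p ≤ 0) :
    (1 + t * a) ^ p ≤ min a 1 ^ p * (1 + t) ^ p := by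
  have hb : 0 < min a 1 := lt_min ha one_pos
  have hle : min a 1 * (1 + t) ≤ 1 + t * a := by
    nlinarith [min_le_left a 1, min_le_right a 1]
  rw [← mul_rpow hb.le (by linarith)]
  exact rpow_le_rpow_of_nonpos (by positivity) hle hp

theorem exists_pos_forall_le_mul_one_add_rpow {ι : Type*} {z t : ι → ℝ} {z₀ a p : ℝ}
    (hz₀ : 0 < z₀) (ha : 0 < a) (ht : ∀ i, 0 ≤ t i) (hp : p ≤ 0)
    (h : ∀ i, z i ≤ z₀ * (1 + t i * a) ^ p) : ∃ C > 0, ∀ i, z i ≤ C * (1 + t i) ^ p := by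
  have hb : 0 < min a 1 := lt_min ha one_pos
  refine ⟨z₀ * min a 1 ^ p, by positivity, fun i => (h i).trans ?_⟩
  rw [mul_assoc]
  exact mul_le_mul_of_nonneg_left (one_add_mul_rpow_le_min_rpow_mul ha (ht i) hp) hz₀.le

end Real

/-- Rate of approach to vacuum at the bifurcation point `ζ = 0`: the amplitudes
`z_n = η^n·z₀` satisfy two-sided bounds in terms of the reflection times `t_n`,
so in particular `z_n = O(1)·(1 + t_n)^(−1/d)`. -/
theorem vacuum_approach_rate (d m z₀ η x₀ x₁ : ℝ) (hd : 1 < d) (hm : 0 < m)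
    (hz₀ : 0 < z₀) (hη₀ : 0 < η) (hη₁ : η < 1) (hx : x₀ < x₁)
    (z : ℕ → ℝ) (hz : ∀ n, z n = η ^ n * z₀)
    (c : ℝ → ℝ) (hc : ∀ y, c y = m * y ^ d) (c₀ : ℝ) (hc₀ : c₀ = m * z₀ ^ d)
    (t : ℕ → ℝ) (ht0 : t 0 = 0)
    (ht : ∀ n, (x₁ - x₀) / c (z n) ≤ t (n + 1) - t n ∧
               t (n + 1) - t n ≤ (x₁ - x₀) / c (z (n + 1))) :
    (∀ n ≥ 1,
      z₀ * (1 + (t n * c₀ / (x₁ - x₀)) * (η ^ (-d) - 1)) ^ (-1 / d) ≤ z n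
        ∧ z n ≤ z₀ * (1 + (t n * c₀ / (x₁ - x₀)) * (1 - η ^ d)) ^ (-1 / d))
      ∧ ∃ C > 0, ∀ n ≥ 1, z n ≤ C * (1 + t n) ^ (-1 / d) := by
  set q := η ^ (-d) with hq_def
  have hq : 1 < q := Real.one_lt_rpow_of_pos_of_lt_one_of_neg hη₀ hη₁ (by linarith)
  set κ := c₀ / (x₁ - x₀)
  have hκ : 0 < κ := div_pos (hc₀ ▸ by positivity) (sub_pos.mpr hx)
  have ht' n : κ⁻¹ * q ^ n ≤ t (n + 1) - t n ∧ t (n + 1) - t n ≤ κ⁻¹ * q ^ (n + 1) := by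
    simp only [hc, hz, Real.pow_mul_rpow_eq_div hη₀.le hz₀.le, ← hq_def, ← mul_div_assoc, ← hc₀,
      div_div_eq_mul_div, mul_div_right_comm] at ht
    rw [inv_div]
    exact ht n
  have ht_nonneg n : 0 ≤ t n :=
    (sum_nonneg fun i _ => by positivity).trans (sum_range_le_of_le_sub ht0 (fun i => (ht' i).1) n)
  have hgeom := geom_bounds_of_increments_mul hq.le hκ ht0 ht'
  have hzq n : z n = z₀ * (q ^ n) ^ (-1 / d) := by
    rw [hz, Real.rpow_neg_pow_rpow_neg_one_div hη₀.le (by positivity), mul_comm]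
  have hexp : -1 / d ≤ 0 := div_nonpos_of_nonpos_of_nonneg (by norm_num) (by linarith)
  have hq_inv : 0 < 1 - q⁻¹ := sub_pos.mpr (inv_lt_one_of_one_lt₀ hq)
  have hbounds n : z₀ * (1 + t n * κ * (q - 1)) ^ (-1 / d) ≤ z n ∧
      z n ≤ z₀ * (1 + t n * κ * (1 - q⁻¹)) ^ (-1 / d) := by
    have hτ : 0 ≤ t n * κ := mul_nonneg (ht_nonneg n) hκ.le
    rw [hzq]
    constructor <;> gcongr ?_ * ?_
    · exact Real.rpow_le_rpow_of_nonpos (by positivity) (hgeom n).1 hexp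
    · exact Real.rpow_le_rpow_of_nonpos (by positivity) (hgeom n).2 hexp
  have hηd : η ^ d = q⁻¹ := by rw [hq_def, Real.rpow_neg hη₀.le, inv_inv]
  simp only [mul_div_assoc, hηd]
  refine ⟨fun n _ => hbounds n, ?_⟩
  obtain ⟨C, hC, hzC⟩ := Real.exists_pos_forall_le_mul_one_add_rpow hz₀
    (mul_pos hκ hq_inv) ht_nonneg hexp (fun n => mul_assoc (t n) κ _ ▸ (hbounds n).2)
  exact ⟨C, hC, fun n _ => hzC n⟩
end
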